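/- Let G be a finite p-group with G = AH where A is an abelian normal subgroup and H a subgroup, and suppose A ∩ H ⊆ A^p[A,H] ∩ Φ(H). Then G/Φ(G) ≅ (A/A^p[A,H]) × (H/Φ(H)), and consequently d(G) = d(A/A^p[A,H]) + d(H), where d denotes the minimal number of generators. -/

import Mathlib

/-!
Maximal subgroups of a finite `p`-group have index `p`, so `Φ(P)` contains all `p`-th powers and
all commutators; conversely an elementary abelian group is a semisimple `ZMod p`-module, so its
Frattini subgroup is trivial, and hence `Φ(P)` lies in every subgroup containing `p`-th powers and
commutators. For `G = AH` this gives `Φ(G) = A^p[A,H] Φ(H)`, and the hypothesis on `A ∩ H` is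
exactly what makes `(aA^p[A,H], hΦ(H)) ↦ ahΦ(G)` injective. Since `d(P) = d(P/Φ(P))` and an
elementary abelian group of order `p^n` has rank `n`, ranks add over the product.
-/

open scoped Pointwise
open scoped commutatorElement

/-- `A^p[A,H]`: the subgroup generated by `p`-th powers of elements of `A`
together with commutators `[a,h]` for `a ∈ A`, `h ∈ H`. -/
def pPowComm (p : ℕ) {G : Type} [Group G] (A H : Subgroup G) : Subgroup G :=
  Subgroup.closure ({x | ∃ a ∈ A, x = a ^ p} ∪ {x | ∃ a ∈ A, ∃ h ∈ H, x = ⁅a, h⁆})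

open Subgroup

theorem mem_frattini_iff {G : Type*} [Group G] {x : G} :
    x ∈ frattini G ↔ ∀ M : Subgroup G, IsCoatom M → x ∈ M := by
  simp [frattini, Order.radical, mem_iInf]

namespace QuotientGroup

variable {G : Type*} [Group G] {N : Subgroup G} [N.Normal]

theorem commute_mk_iff {x y : G} : Commute (x : G ⧸ N) y ↔ ⁅x, y⁆ ∈ N := by
  rw [← commutatorElement_eq_one_iff_commute, ← mk'_apply, ← mk'_apply,
    ← map_commutatorElement, mk'_apply, eq_one_iff]

theorem isMulCommutative_iff : IsMulCommutative (G ⧸ N) ↔ ∀ x y : G, ⁅x, y⁆ ∈ N :=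
  Normal.quotient_commutative_iff_commutator_le.trans <| by
    simp [_root_.commutator_def, commutator_le]

theorem forall_pow_eq_one_iff {n : ℕ} : (∀ x : G ⧸ N, x ^ n = 1) ↔ ∀ x : G, x ^ n ∈ N :=
  mk_surjective.forall.trans <| by simp [← mk_pow, eq_one_iff]

end QuotientGroup

open scoped IsMulCommutative in
theorem frattini_eq_bot_of_pow_eq_one {V : Type*} [Group V] [IsMulCommutative V] (p : ℕ)
    [Fact p.Prime] (hV : ∀ x : V, x ^ p = 1) : frattini V = ⊥ := by
  have : Module (ZMod p) (Additive V) :=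
    AddCommGroup.zmodModule fun x ↦ congrArg Additive.ofMul (hV x.toMul)
  let e : Subgroup V ≃o Submodule (ZMod p) (Additive V) :=
    Subgroup.toAddSubgroup.trans (AddSubgroup.toZModSubmodule p)
  have : e (frattini V) = ⊥ := e.map_radical.trans (by
    simpa [Module.jacobson, Order.radical, sInf_eq_iInf]
      using IsSemisimpleModule.jacobson_eq_bot (ZMod p) (Additive V))
  rwa [← e.map_bot, e.apply_eq_iff_eq] at this

theorem frattini_le_of_pow_mem_of_commutator_mem {P : Type*} [Group P] (p : ℕ) [Fact p.Prime]
    {N : Subgroup P} (hpow : ∀ x : P, x ^ p ∈ N) (hcomm : ∀ x y : P, ⁅x, y⁆ ∈ N) :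
    frattini P ≤ N := by
  have : N.Normal := ⟨fun n hn g ↦ by
    simpa [← conj_eq_commutatorElement_mul] using N.mul_mem (hcomm g n) hn⟩
  have : IsMulCommutative (P ⧸ N) := QuotientGroup.isMulCommutative_iff.mpr hcomm
  have hbot : frattini (P ⧸ N) = ⊥ :=
    frattini_eq_bot_of_pow_eq_one p (QuotientGroup.forall_pow_eq_one_iff.mpr hpow)
  simpa [hbot] using frattini_le_comap_frattini_of_surjective (QuotientGroup.mk'_surjective N)

namespace IsPGroup

variable {p : ℕ} [Fact p.Prime] {P : Type*} [Group P] [Finite P]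

theorem card_eq_of_isSimpleOrder (hP : IsPGroup p P) [IsSimpleOrder (Subgroup P)] :
    Nat.card P = p := by
  have : Nontrivial P := by
    rw [← Subgroup.nontrivial_iff]; infer_instance
  obtain ⟨x, hx⟩ := exists_prime_orderOf_dvd_card' (G := P) p
    (hP.card_eq_or_dvd.resolve_left Finite.one_lt_card.ne')
  have hx1 : x ≠ 1 := by
    rintro rfl
    exact (Fact.out : p.Prime).one_lt.ne' (hx ▸ orderOf_one)
  rw [← hx, ← Nat.card_zpowers, (eq_bot_or_eq_top (zpowers x)).resolve_left
    (zpowers_ne_bot.mpr hx1), card_top]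

theorem normal_of_isCoatom (hP : IsPGroup p P) {M : Subgroup P} (hM : IsCoatom M) : M.Normal :=
  NormalizerCondition.normal_of_coatom M
    (Group.normalizerCondition_of_isNilpotent (h := hP.isNilpotent)) hM

theorem index_eq_of_isCoatom (hP : IsPGroup p P) {M : Subgroup P} [M.Normal] (hM : IsCoatom M) :
    M.index = p := by
  have : IsSimpleOrder (Subgroup (P ⧸ M)) :=
    (OrderIso.isSimpleOrder_iff (β := Set.Ici M) (QuotientGroup.comapMk'OrderIso M)).mpr
      (Set.isSimpleOrder_Ici_iff_isCoatom.mpr hM)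
  exact (hP.to_quotient M).card_eq_of_isSimpleOrder

theorem pow_mem_frattini (hP : IsPGroup p P) (x : P) : x ^ p ∈ frattini P :=
  mem_frattini_iff.mpr fun M hM ↦ by
    have := hP.normal_of_isCoatom hM
    simpa [hP.index_eq_of_isCoatom hM] using M.pow_index_mem x

theorem commutator_mem_frattini (hP : IsPGroup p P) (x y : P) : ⁅x, y⁆ ∈ frattini P :=
  mem_frattini_iff.mpr fun M hM ↦ by
    have := hP.normal_of_isCoatom hM
    have : IsCyclic (P ⧸ M) := isCyclic_of_prime_card (hP.index_eq_of_isCoatom hM)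
    exact QuotientGroup.isMulCommutative_iff.mp inferInstance x y

theorem map_subtype_frattini_le (hP : IsPGroup p P) (H : Subgroup P) :
    (frattini H).map H.subtype ≤ frattini P :=
  map_le_iff_le_comap.mpr <| frattini_le_of_pow_mem_of_commutator_mem p
    (fun x ↦ hP.pow_mem_frattini (x : P)) (fun x y ↦ hP.commutator_mem_frattini (x : P) y)

end IsPGroup

theorem AddSubgroup.toZModSubmodule_closure {M : Type*} [AddCommGroup M] (n : ℕ)
    [Module (ZMod n) M] (s : Set M) :
    AddSubgroup.toZModSubmodule n (AddSubgroup.closure s) = Submodule.span (ZMod n) s :=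
  le_antisymm
    ((AddSubgroup.toZModSubmodule n).le_symm_apply.mp
      ((AddSubgroup.closure_le _).mpr Submodule.subset_span))
    (Submodule.span_le.mpr AddSubgroup.subset_closure)

namespace Group

theorem rank_eq_rank_quotient_frattini (P : Type*) [Group P] [Finite P] :
    rank P = rank (P ⧸ frattini P) := by
  refine le_antisymm ?_ (rank_le_of_surjective _ (QuotientGroup.mk'_surjective (frattini P)))
  classical
  obtain ⟨S, hS, hSgen⟩ := rank_spec (P ⧸ frattini P)
  let T : Finset P := S.image Quotient.out
  have hT : (closure (T : Set P)).map (QuotientGroup.mk' (frattini P)) = ⊤ := by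
    rw [MonoidHom.map_closure, ← hSgen]
    congr 1
    ext q
    simp [T]
  have hTgen : closure (T : Set P) = ⊤ := frattini_nongenerating <| by
    simpa [comap_map_eq] using congrArg (comap (QuotientGroup.mk' (frattini P))) hT
  exact (rank_le hTgen).trans (Finset.card_image_le.trans hS.le)

theorem rank_eq_finrank_zmod (V : Type*) [CommGroup V] [Finite V] (p : ℕ) [Fact p.Prime]
    [Module (ZMod p) (Additive V)] :
    rank V = Module.finrank (ZMod p) (Additive V) := by
  classical
  have hgen (S : Finset V) : closure (S : Set V) = ⊤ ↔
      Submodule.span (ZMod p) (↑(S.image Additive.ofMul) : Set (Additive V)) = ⊤ := by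
    rw [← (Subgroup.toAddSubgroup.trans (AddSubgroup.toZModSubmodule p)).apply_eq_iff_eq,
      OrderIso.map_top]
    simp [toAddSubgroup_closure, AddSubgroup.toZModSubmodule_closure,
      Equiv.image_eq_preimage_symm]
  refine le_antisymm ?_ ?_
  · let b := Module.finBasis (ZMod p) (Additive V)
    let T : Finset V := Finset.univ.image fun i ↦ (b i).toMul
    have hT : closure (T : Set V) = ⊤ := by
      rw [hgen, ← b.span_eq]
      congr 1
      ext x
      simp [T]
    exact (rank_le hT).trans (Finset.card_image_le.trans (by simp))
  · obtain ⟨S, hS, hSgen⟩ := rank_spec V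
    calc Module.finrank (ZMod p) (Additive V)
        ≤ (S.image Additive.ofMul).card := by
          have := finrank_span_finset_le_card (R := ZMod p) (S.image Additive.ofMul)
          rwa [Set.finrank, (hgen S).mp hSgen, finrank_top] at this
      _ ≤ S.card := Finset.card_image_le
      _ = rank V := hS

open scoped IsMulCommutative in
theorem card_eq_pow_rank_of_pow_eq_one {V : Type*} [Group V] [IsMulCommutative V] [Finite V]
    (p : ℕ) [Fact p.Prime] (hV : ∀ x : V, x ^ p = 1) : Nat.card V = p ^ rank V := by
  have : Module (ZMod p) (Additive V) :=
    AddCommGroup.zmodModule fun x ↦ congrArg Additive.ofMul (hV x.toMul)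
  have : Module.Finite (ZMod p) (Additive V) := Module.Finite.of_finite
  rw [rank_eq_finrank_zmod V p]
  simpa using (Nat.card_congr Additive.ofMul).trans
    (Module.natCard_eq_pow_finrank (K := ZMod p) (V := Additive V))

theorem rank_prod_of_pow_eq_one {V W : Type*} [Group V] [Group W] [IsMulCommutative V]
    [IsMulCommutative W] [Finite V] [Finite W] (p : ℕ) [Fact p.Prime]
    (hV : ∀ x : V, x ^ p = 1) (hW : ∀ x : W, x ^ p = 1) :
    rank (V × W) = rank V + rank W := by
  apply Nat.pow_right_injective (Fact.out : p.Prime).two_le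
  simp only [pow_add, ← card_eq_pow_rank_of_pow_eq_one p hV, ← card_eq_pow_rank_of_pow_eq_one p hW,
    ← card_eq_pow_rank_of_pow_eq_one p fun x : V × W ↦ Prod.ext (hV x.1) (hW x.2), Nat.card_prod]

end Group

section MulEqUniv

variable {G : Type*} [Group G] {A H : Subgroup G}

theorem sup_eq_top_of_mul_eq_univ (hprod : (A : Set G) * (H : Set G) = Set.univ) : A ⊔ H = ⊤ :=
  eq_top_iff.mpr fun x _ ↦ by
    obtain ⟨a, ha, h, hh, rfl⟩ := Set.mem_mul.mp (hprod ▸ Set.mem_univ x)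
    exact mul_mem_sup ha hh

theorem commutator_mem_of_mul_eq_univ {N : Subgroup G} [N.Normal]
    (hprod : (A : Set G) * (H : Set G) = Set.univ) (hA : ∀ a ∈ A, ∀ b ∈ A, ⁅a, b⁆ ∈ N)
    (hAH : ∀ a ∈ A, ∀ h ∈ H, ⁅a, h⁆ ∈ N) (hH : ∀ h ∈ H, ∀ k ∈ H, ⁅h, k⁆ ∈ N) (x y : G) :
    ⁅x, y⁆ ∈ N := by
  obtain ⟨a, ha, h, hh, rfl⟩ := Set.mem_mul.mp (hprod ▸ Set.mem_univ x)
  obtain ⟨b, hb, k, hk, rfl⟩ := Set.mem_mul.mp (hprod ▸ Set.mem_univ y)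
  simp only [← QuotientGroup.commute_mk_iff, QuotientGroup.mk_mul] at *
  exact ((hA a ha b hb).mul_right (hAH a ha k hk)).mul_left
    ((hAH b hb h hh).symm.mul_right (hH h hh k hk))

theorem pow_mem_of_mul_eq_univ {N : Subgroup G} [N.Normal]
    (hprod : (A : Set G) * (H : Set G) = Set.univ) (hAH : ∀ a ∈ A, ∀ h ∈ H, ⁅a, h⁆ ∈ N) {n : ℕ}
    (hA : ∀ a ∈ A, a ^ n ∈ N) (hH : ∀ h ∈ H, h ^ n ∈ N) (x : G) : x ^ n ∈ N := by
  obtain ⟨a, ha, h, hh, rfl⟩ := Set.mem_mul.mp (hprod ▸ Set.mem_univ x)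
  rw [← QuotientGroup.eq_one_iff, QuotientGroup.mk_pow, QuotientGroup.mk_mul,
    (QuotientGroup.commute_mk_iff.mpr (hAH a ha h hh)).mul_pow, ← QuotientGroup.mk_pow,
    ← QuotientGroup.mk_pow, (QuotientGroup.eq_one_iff _).mpr (hA a ha),
    (QuotientGroup.eq_one_iff _).mpr (hH h hh), one_mul]

theorem normal_sup_of_commutator_mem {K F : Subgroup G} [K.Normal] (hAH : A ⊔ H = ⊤)
    (hHF : H ≤ normalizer (F : Set G)) (hAF : ∀ a ∈ A, ∀ f ∈ F, ⁅a, f⁆ ∈ K) :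
    (K ⊔ F).Normal := by
  rw [← normalizer_eq_top_iff, eq_top_iff, ← hAH]
  refine sup_le ?_ ((le_inf (normalizer_eq_top K ▸ le_top) hHF).trans
    (normalizer_inf_normalizer_le_normalizer_sup K F))
  rw [← K.closure_eq, ← F.closure_eq, ← Subgroup.closure_union]
  refine le_normalizer_closure_iff.mpr fun a ha x hx ↦ ?_
  rw [Subgroup.closure_union, K.closure_eq, F.closure_eq]
  rcases hx with hx | hx
  · exact mem_sup_left (Normal.conj_mem inferInstance x hx a)
  · rw [← MulAut.conj_apply, conj_eq_commutatorElement_mul]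
    exact mul_mem_sup (hAF a ha x hx) hx

theorem mem_and_mem_of_mul_mem_sup {K F : Subgroup G} [K.Normal] (hKA : K ≤ A) (hFH : F ≤ H)
    (hcap : A ⊓ H ≤ K ⊓ F) {a h : G} (ha : a ∈ A) (hh : h ∈ H) (hah : a * h ∈ K ⊔ F) :
    a ∈ K ∧ h ∈ F := by
  obtain ⟨k, hk, f, hf, hkf⟩ := mem_sup_of_normal_left.mp hah
  have hw : k⁻¹ * a = f * h⁻¹ := by
    rw [eq_mul_inv_iff_mul_eq, mul_assoc, ← hkf, inv_mul_cancel_left]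
  have hwKF : k⁻¹ * a ∈ K ⊓ F :=
    hcap ⟨A.mul_mem (A.inv_mem (hKA hk)) ha, hw ▸ H.mul_mem (hFH hf) (H.inv_mem hh)⟩
  refine ⟨by simpa using K.mul_mem hk hwKF.1, ?_⟩
  rw [show h = (k⁻¹ * a)⁻¹ * f by rw [hw, mul_inv_rev, inv_inv, inv_mul_cancel_right]]
  exact F.mul_mem (F.inv_mem hwKF.2) hf

theorem nonempty_mulEquiv_prod_of_mul_eq_univ {N K : Subgroup G} [N.Normal] [K.Normal]
    {F : Subgroup H} [F.Normal] (hprod : (A : Set G) * (H : Set G) = Set.univ) (hKA : K ≤ A)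
    (hAH : ∀ a ∈ A, ∀ h ∈ H, ⁅a, h⁆ ∈ K) (hcap : A ⊓ H ≤ K ⊓ F.map H.subtype)
    (hN : N = K ⊔ F.map H.subtype) :
    Nonempty ((G ⧸ N) ≃* (A ⧸ K.subgroupOf A) × (H ⧸ F)) := by
  have hKN : K ≤ N := hN ▸ le_sup_left
  have hFN : F.map H.subtype ≤ N := hN ▸ le_sup_right
  let ψA := QuotientGroup.map (K.subgroupOf A) N A.subtype fun _ hx ↦ hKN hx
  let ψH := QuotientGroup.map F N H.subtype fun x hx ↦ hFN ⟨x, hx, rfl⟩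
  have hcomm : ∀ x y, Commute (ψA x) (ψH y) := by
    rintro ⟨a⟩ ⟨h⟩
    exact QuotientGroup.commute_mk_iff.mpr (hKN (hAH a a.2 h h.2))
  let ψ := ψA.noncommCoprod ψH hcomm
  have hinj : Function.Injective ψ := by
    refine (injective_iff_map_eq_one ψ).mpr ?_
    rintro ⟨x, y⟩ h1
    induction x using QuotientGroup.induction_on with | H a =>
    induction y using QuotientGroup.induction_on with | H h =>
    have := mem_and_mem_of_mul_mem_sup hKA (map_subtype_le F) hcap a.2 h.2
      (hN ▸ (QuotientGroup.eq_one_iff _).mp h1)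
    simpa [Prod.ext_iff, QuotientGroup.eq_one_iff, mem_subgroupOf,
      mem_map_iff_mem H.subtype_injective] using this
  have hsurj : Function.Surjective ψ := by
    rintro ⟨g⟩
    obtain ⟨a, ha, h, hh, rfl⟩ := Set.mem_mul.mp (hprod ▸ Set.mem_univ g)
    exact ⟨((⟨a, ha⟩ : A), (⟨h, hh⟩ : H)), rfl⟩
  exact ⟨(MulEquiv.ofBijective ψ ⟨hinj, hsurj⟩).symm⟩

end MulEqUniv

section PPowComm

variable {G : Type} [Group G] {A H : Subgroup G} (p : ℕ)

theorem pow_mem_pPowComm {a : G} (ha : a ∈ A) : a ^ p ∈ pPowComm p A H :=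
  subset_closure (Or.inl ⟨a, ha, rfl⟩)

theorem commutatorElement_mem_pPowComm {a h : G} (ha : a ∈ A) (hh : h ∈ H) :
    ⁅a, h⁆ ∈ pPowComm p A H :=
  subset_closure (Or.inr ⟨a, ha, h, hh, rfl⟩)

theorem pPowComm_le [A.Normal] : pPowComm p A H ≤ A :=
  (closure_le _).mpr <| by
    rintro _ (⟨a, ha, rfl⟩ | ⟨a, ha, h, hh, rfl⟩)
    · exact A.pow_mem ha p
    · exact commutator_le_left A H (commutator_mem_commutator ha hh)

theorem pPowComm_normal [A.Normal] [IsMulCommutative A] (hAH : A ⊔ H = ⊤) :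
    (pPowComm p A H).Normal := by
  rw [← normalizer_eq_top_iff, eq_top_iff, ← hAH]
  refine sup_le (le_normalizer_iff.mpr fun a ha k hk ↦ ?_) (le_normalizer_closure_iff.mpr ?_)
  · rwa [setLike_mul_comm ha (pPowComm_le p hk), mul_inv_cancel_right]
  · rintro h hh _ (⟨a, ha, rfl⟩ | ⟨a, ha, k, hk, rfl⟩)
    · rw [← conj_pow]
      exact pow_mem_pPowComm p (Normal.conj_mem ‹_› a ha h)
    · rw [conjugate_commutatorElement]
      exact commutatorElement_mem_pPowComm p (Normal.conj_mem ‹_› a ha h)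
        (H.mul_mem (H.mul_mem hh hk) (H.inv_mem hh))

theorem frattini_eq_pPowComm_sup [Fact p.Prime] [Finite G] (hG : IsPGroup p G) [A.Normal]
    [IsMulCommutative A] (hprod : (A : Set G) * (H : Set G) = Set.univ) :
    frattini G = pPowComm p A H ⊔ (frattini H).map H.subtype := by
  set K := pPowComm p A H
  set F := (frattini H).map H.subtype
  have hAH := sup_eq_top_of_mul_eq_univ hprod
  have : K.Normal := pPowComm_normal p hAH
  have hHF : H ≤ normalizer (F : Set G) := by
    have := le_normalizer_map H.subtype (H := frattini H)
    rwa [normalizer_eq_top, ← MonoidHom.range_eq_map, range_subtype] at this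
  have : (K ⊔ F).Normal := normal_sup_of_commutator_mem hAH hHF
    fun a ha f hf ↦ commutatorElement_mem_pPowComm p ha (map_subtype_le _ hf)
  have hH := hG.to_subgroup H
  refine le_antisymm (frattini_le_of_pow_mem_of_commutator_mem p ?_ ?_) (sup_le ?_ ?_)
  · exact pow_mem_of_mul_eq_univ hprod
      (fun a ha h hh ↦ mem_sup_left (commutatorElement_mem_pPowComm p ha hh))
      (fun a ha ↦ mem_sup_left (pow_mem_pPowComm p ha))
      (fun h hh ↦ mem_sup_right ⟨_, hH.pow_mem_frattini ⟨h, hh⟩, rfl⟩)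
  · exact commutator_mem_of_mul_eq_univ hprod
      (fun a ha b hb ↦
        (commutatorElement_eq_one_iff_mul_comm.mpr (setLike_mul_comm ha hb)).symm ▸ one_mem _)
      (fun a ha h hh ↦ mem_sup_left (commutatorElement_mem_pPowComm p ha hh))
      (fun h hh k hk ↦ mem_sup_right ⟨_, hH.commutator_mem_frattini ⟨h, hh⟩ ⟨k, hk⟩, rfl⟩)
  · refine (closure_le _).mpr ?_
    rintro _ (⟨a, -, rfl⟩ | ⟨a, -, h, -, rfl⟩)
    · exact hG.pow_mem_frattini a
    · exact hG.commutator_mem_frattini a h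
  · exact hG.map_subtype_frattini_le H

end PPowComm

theorem frattiniQuotient_and_rank_of_decomposition_general (p : ℕ) [Fact p.Prime] (G : Type)
    [Group G] [Finite G] (hG : IsPGroup p G) (A H : Subgroup G) [A.Normal]
    [IsMulCommutative A]
    (hprod : (A : Set G) * (H : Set G) = Set.univ)
    (hcap : A ⊓ H ≤ pPowComm p A H ⊓ (frattini ↥H).map H.subtype) :
    Nonempty ((G ⧸ frattini G) ≃*
      (↥A ⧸ (pPowComm p A H).subgroupOf A) × (↥H ⧸ frattini ↥H)) ∧
    Group.rank G = Group.rank (↥A ⧸ (pPowComm p A H).subgroupOf A) + Group.rank ↥H := by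
  have : (pPowComm p A H).Normal := pPowComm_normal p (sup_eq_top_of_mul_eq_univ hprod)
  obtain ⟨e⟩ := nonempty_mulEquiv_prod_of_mul_eq_univ hprod (pPowComm_le p)
    (fun _ ha _ hh ↦ commutatorElement_mem_pPowComm p ha hh) hcap
    (frattini_eq_pPowComm_sup p hG hprod)
  refine ⟨⟨e⟩, ?_⟩
  have hH := hG.to_subgroup H
  have : IsMulCommutative (A ⧸ (pPowComm p A H).subgroupOf A) :=
    QuotientGroup.isMulCommutative_iff.mpr fun a b ↦
      (commutatorElement_eq_one_iff_mul_comm.mpr (mul_comm' a b)).symm ▸ one_mem _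
  have : IsMulCommutative (H ⧸ frattini H) :=
    QuotientGroup.isMulCommutative_iff.mpr hH.commutator_mem_frattini
  have hpA : ∀ x : A ⧸ (pPowComm p A H).subgroupOf A, x ^ p = 1 :=
    QuotientGroup.forall_pow_eq_one_iff.mpr fun a ↦ mem_subgroupOf.mpr (pow_mem_pPowComm p a.2)
  have hpH : ∀ x : H ⧸ frattini H, x ^ p = 1 :=
    QuotientGroup.forall_pow_eq_one_iff.mpr hH.pow_mem_frattini
  rw [Group.rank_eq_rank_quotient_frattini G, Group.rank_congr e,
    Group.rank_prod_of_pow_eq_one p hpA hpH, ← Group.rank_eq_rank_quotient_frattini H]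

/-- If `G = AH` with `A` abelian normal and `A ∩ H ⊆ A^p[A,H] ∩ Φ(H)`, then
`G/Φ(G) ≅ (A/A^p[A,H]) × (H/Φ(H))` and `d(G) = d(A/A^p[A,H]) + d(H)`. -/
theorem frattiniQuotient_and_rank_of_decomposition (p : ℕ) [Fact p.Prime] (G : Type)
    [Group G] [Finite G] (hG : IsPGroup p G) (A H : Subgroup G) [A.Normal]
    [IsMulCommutative A]
    (hprod : (A : Set G) * (H : Set G) = Set.univ)
    (hcap : A ⊓ H ≤ pPowComm p A H ⊓ (frattini ↥H).map H.subtype)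
    [hN : (frattini ↥H).Normal] :
    Nonempty ((G ⧸ frattini G) ≃*
      (↥A ⧸ (pPowComm p A H).subgroupOf A) × (↥H ⧸ frattini ↥H)) ∧
    Group.rank G = Group.rank (↥A ⧸ (pPowComm p A H).subgroupOf A) + Group.rank ↥H :=
  frattiniQuotient_and_rank_of_decomposition_general p G hG A H hprod hcap
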